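/- Let σ > 0 with 1.01σ ≤ 1, let n ∈ ℕ, and let g : {0,1}^n → {0,1} be a monotone Boolean function. Then there exists q ∈ [σ, 1.01σ] such that the total influence of g under π_q^n satisfies I^{(q)}(g) ≤ 100/σ. -/

import Mathlib

/-- The weight of a point `x ∈ {0,1}^n` under the product distribution `π_σ^n`. -/
noncomputable def cubeWeight (n : ℕ) (σ : ℝ) (x : Fin n → Bool) : ℝ :=
  ∏ i, if x i then σ else 1 - σ

open Classical in
/-- The probability of the event `E` under the product distribution `π_σ^n` on `{0,1}^n`,
where each coordinate is independently `1` with probability `σ`. -/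
noncomputable def cubePr (n : ℕ) (σ : ℝ) (E : (Fin n → Bool) → Prop) : ℝ :=
  ∑ x : Fin n → Bool, if E x then cubeWeight n σ x else 0

/-- The total influence `I^{(q)}(g) = Σᵢ E_{x∼π_q^n} |g(x) − g(xⁱ)|` of a Boolean function
`g : {0,1}^n → {0,1}` under the product distribution `π_q^n`, where `xⁱ` differs from `x`
only in the `i`-th coordinate. -/
noncomputable def totalInfluence (n : ℕ) (q : ℝ) (g : (Fin n → Bool) → Bool) : ℝ :=
  ∑ i : Fin n, ∑ x : Fin n → Bool,
    cubeWeight n q x *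
      |(if g x then (1 : ℝ) else 0) -
        (if g (Function.update x i (!x i)) then (1 : ℝ) else 0)|

/-! The probability `μ_q(g)` that a monotone `g` equals `1` under `π_q^n` is a polynomial in `q`
taking values in `[0,1]`, and by the Margulis–Russo formula its derivative is the total influence
`I^{(q)}(g)`. By the mean value theorem some `q ∈ [σ, 1.01σ]` has
`I^{(q)}(g) = (μ_{1.01σ}(g) - μ_σ(g)) / (0.01σ) ≤ 100/σ`. -/

open Finset

section FlipCoord

variable {n : ℕ} (i : Fin n)

def flipCoord (x : Fin n → Bool) : Fin n → Bool :=
  Function.update x i (!x i)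

@[simp]
lemma flipCoord_apply_self (x : Fin n → Bool) : flipCoord i x i = !x i := by
  simp [flipCoord]

lemma flipCoord_apply_of_ne {j : Fin n} (hj : j ≠ i) (x : Fin n → Bool) :
    flipCoord i x j = x j :=
  Function.update_of_ne hj _ _

lemma flipCoord_involutive : Function.Involutive (flipCoord i) := by
  intro x
  simp [flipCoord, Function.update_idem, Function.update_eq_self]

lemma sum_comp_flipCoord {M : Type*} [AddCommMonoid M] (G : (Fin n → Bool) → M) :
    ∑ x, G (flipCoord i x) = ∑ x, G x :=
  Equiv.sum_comp (flipCoord_involutive i).toPerm G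

lemma two_mul_sum_eq_sum_add_comp_flipCoord (G : (Fin n → Bool) → ℝ) :
    2 * ∑ x, G x = ∑ x, (G x + G (flipCoord i x)) := by
  rw [sum_add_distrib, sum_comp_flipCoord]
  ring

lemma flipCoord_apply_eq_true_of_apply_eq_true {x : Fin n → Bool} (hxi : x i = false)
    (j : Fin n) (hj : x j = true) : flipCoord i x j = true := by
  rcases eq_or_ne j i with rfl | hji
  · simp [hxi] at hj
  · rwa [flipCoord_apply_of_ne i hji]

end FlipCoord

section CubeWeight

variable {n : ℕ}

lemma cubeWeight_nonneg {q : ℝ} (hq0 : 0 ≤ q) (hq1 : q ≤ 1) (x : Fin n → Bool) :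
    0 ≤ cubeWeight n q x :=
  prod_nonneg fun i _ => by split_ifs <;> linarith

lemma sum_cubeWeight (n : ℕ) (q : ℝ) : ∑ x : Fin n → Bool, cubeWeight n q x = 1 := by
  simp only [cubeWeight]
  rw [← Fintype.piFinset_univ,
    ← prod_univ_sum (fun _ : Fin n => (univ : Finset Bool)) fun _ b => if b then q else 1 - q]
  simp

lemma cubePr_nonneg {q : ℝ} (hq0 : 0 ≤ q) (hq1 : q ≤ 1) (E : (Fin n → Bool) → Prop) :
    0 ≤ cubePr n q E :=
  sum_nonneg fun x _ => by
    split_ifs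
    exacts [cubeWeight_nonneg hq0 hq1 x, le_rfl]

lemma cubePr_le_one {q : ℝ} (hq0 : 0 ≤ q) (hq1 : q ≤ 1) (E : (Fin n → Bool) → Prop) :
    cubePr n q E ≤ 1 :=
  calc cubePr n q E ≤ ∑ x, cubeWeight n q x :=
        sum_le_sum fun x _ => by
          split_ifs
          exacts [le_rfl, cubeWeight_nonneg hq0 hq1 x]
    _ = 1 := sum_cubeWeight n q

def cubeWeightExcept (n : ℕ) (q : ℝ) (i : Fin n) (x : Fin n → Bool) : ℝ :=
  ∏ j ∈ univ.erase i, if x j then q else 1 - q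

lemma cubeWeight_eq_mul_cubeWeightExcept (q : ℝ) (i : Fin n) (x : Fin n → Bool) :
    cubeWeight n q x = (if x i then q else 1 - q) * cubeWeightExcept n q i x :=
  (mul_prod_erase _ _ (mem_univ i)).symm

lemma cubeWeightExcept_flipCoord (q : ℝ) (i : Fin n) (x : Fin n → Bool) :
    cubeWeightExcept n q i (flipCoord i x) = cubeWeightExcept n q i x :=
  prod_congr rfl fun _ hj => by rw [flipCoord_apply_of_ne i (ne_of_mem_erase hj)]

lemma cubeWeight_add_cubeWeight_flipCoord (q : ℝ) (i : Fin n) (x : Fin n → Bool) :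
    cubeWeight n q x + cubeWeight n q (flipCoord i x) = cubeWeightExcept n q i x := by
  rw [cubeWeight_eq_mul_cubeWeightExcept q i, cubeWeight_eq_mul_cubeWeightExcept q i,
    cubeWeightExcept_flipCoord, flipCoord_apply_self]
  cases x i <;> simp <;> ring

lemma hasDerivAt_cubeWeight (x : Fin n → Bool) (q : ℝ) :
    HasDerivAt (fun q => cubeWeight n q x)
      (∑ i, (if x i then 1 else -1) * cubeWeightExcept n q i x) q := by
  have hfactor (i : Fin n) : HasDerivAt (fun q : ℝ => if x i then q else 1 - q)
      (if x i then 1 else -1) q := by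
    cases x i
    · simpa using (hasDerivAt_id q).const_sub 1
    · simpa using hasDerivAt_id' q
  simpa [cubeWeight, cubeWeightExcept, mul_comm] using
    HasDerivAt.fun_finsetProd fun i (_ : i ∈ univ) => hfactor i

end CubeWeight

section Russo

variable {n : ℕ}

/-- Russo's formula along one coordinate: pairing `x` with `flipCoord i x`, both sides are half of
`∑ x, cubeWeightExcept n q i x * ((f x - f (flipCoord i x)) * ±1)`. -/
lemma sum_mul_sign_mul_cubeWeightExcept (f : (Fin n → Bool) → ℝ) (q : ℝ) (i : Fin n) :
    ∑ x, f x * ((if x i then 1 else -1) * cubeWeightExcept n q i x) =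
      ∑ x, cubeWeight n q x * ((f x - f (flipCoord i x)) * if x i then 1 else -1) := by
  have hsign (x : Fin n → Bool) :
      (if flipCoord i x i then (1 : ℝ) else -1) = -if x i then 1 else -1 := by
    rw [flipCoord_apply_self]
    cases x i <;> simp
  apply mul_left_cancel₀ (two_ne_zero' ℝ)
  rw [two_mul_sum_eq_sum_add_comp_flipCoord i, two_mul_sum_eq_sum_add_comp_flipCoord i]
  refine sum_congr rfl fun x _ => ?_
  rw [hsign, cubeWeightExcept_flipCoord, flipCoord_involutive i x,
    ← cubeWeight_add_cubeWeight_flipCoord q i x]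
  ring

lemma hasDerivAt_sum_mul_cubeWeight (f : (Fin n → Bool) → ℝ) (q : ℝ) :
    HasDerivAt (fun q => ∑ x, f x * cubeWeight n q x)
      (∑ i, ∑ x, cubeWeight n q x * ((f x - f (flipCoord i x)) * if x i then 1 else -1)) q := by
  refine (HasDerivAt.fun_sum fun x (_ : x ∈ univ) =>
    (hasDerivAt_cubeWeight x q).const_mul (f x)).congr_deriv ?_
  simp only [mul_sum]
  rw [sum_comm]
  exact sum_congr rfl fun i _ => sum_mul_sign_mul_cubeWeightExcept f q i

/-- Flipping a coordinate from `0` to `1` can only raise a monotone `g`. -/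
lemma indicator_sub_flipCoord_mul_sign {g : (Fin n → Bool) → Bool}
    (hmono : ∀ x y : Fin n → Bool, (∀ i, x i = true → y i = true) → g x = true → g y = true)
    (i : Fin n) (x : Fin n → Bool) :
    ((if g x then (1 : ℝ) else 0) - (if g (flipCoord i x) then 1 else 0)) *
        (if x i then 1 else -1) =
      |(if g x then (1 : ℝ) else 0) - (if g (flipCoord i x) then 1 else 0)| := by
  have hup (y : Fin n → Bool) (hy : y i = false) (hgy : g y = true) : g (flipCoord i y) = true :=
    hmono y _ (flipCoord_apply_eq_true_of_apply_eq_true i hy) hgy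
  cases hxi : x i
  · have hle := hup x hxi
    cases hg : g x <;> cases hg' : g (flipCoord i x) <;> simp_all
  · have hle := hup (flipCoord i x) (by simp [hxi])
    rw [flipCoord_involutive i x] at hle
    cases hg : g x <;> cases hg' : g (flipCoord i x) <;> simp_all

theorem hasDerivAt_cubePr_of_monotone {g : (Fin n → Bool) → Bool}
    (hmono : ∀ x y : Fin n → Bool, (∀ i, x i = true → y i = true) → g x = true → g y = true)
    (q : ℝ) :
    HasDerivAt (fun q => cubePr n q fun x => g x = true) (totalInfluence n q g) q := by
  have hpr : (fun q => cubePr n q fun x => g x = true) =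
      fun q => ∑ x, (if g x then (1 : ℝ) else 0) * cubeWeight n q x := by
    funext q
    simp only [cubePr, ite_mul, one_mul, zero_mul]
    congr!
  rw [hpr]
  refine (hasDerivAt_sum_mul_cubeWeight _ q).congr_deriv ?_
  simp only [indicator_sub_flipCoord_mul_sign hmono]
  rfl

end Russo

/-- **Existence of a sparse level for the influence** (a step in the proof of Lemma 3.3):
for `σ > 0` with `1.01σ ≤ 1` and any monotone Boolean function `g : {0,1}^n → {0,1}`,
there exists `q ∈ [σ, 1.01σ]` with total influence `I^{(q)}(g) ≤ 100/σ`. -/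
theorem exists_small_influence (σ : ℝ) (hσ0 : 0 < σ) (hσ1 : 1.01 * σ ≤ 1)
    (n : ℕ) (g : (Fin n → Bool) → Bool)
    (hmono : ∀ x y : Fin n → Bool, (∀ i, x i = true → y i = true) →
      g x = true → g y = true) :
    ∃ q : ℝ, σ ≤ q ∧ q ≤ 1.01 * σ ∧ totalInfluence n q g ≤ 100 / σ := by
  set F : ℝ → ℝ := fun q => cubePr n q fun x => g x = true
  have hF := hasDerivAt_cubePr_of_monotone hmono
  obtain ⟨q, ⟨hσq, hq⟩, hslope⟩ := exists_hasDerivAt_eq_slope F (totalInfluence n · g)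
    (by linarith : σ < 1.01 * σ) (fun q _ => (hF q).continuousAt.continuousWithinAt)
    (fun q _ => hF q)
  have hFσ : 0 ≤ F σ := cubePr_nonneg hσ0.le (by linarith) _
  have hF1 : F (1.01 * σ) ≤ 1 := cubePr_le_one (by linarith) hσ1 _
  refine ⟨q, hσq.le, hq.le, ?_⟩
  rw [hslope, div_le_div_iff₀ (by linarith) hσ0]
  nlinarith
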